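/- arXiv:math/0508187 — 2 statements merged into one kernel-verified Lean document; each statement's English description precedes it below -/
import Mathlib

section
/- Let V be a vector space over F₂ and A = T(V) its tensor algebra with inclusion ι : V → A, graded-piece projections π_0 : A → F₂ and π_1 : A → V as below. Let ∂ : A → A be a linear map satisfying the Leibniz rule ∂(xy) = ∂(x)y + x∂(y) for all x, y ∈ A and ∂ ∘ ∂ = 0, and suppose π_0(∂(ι v)) = 0 for every v ∈ V. Then the linearized differential ∂_1 := π_1 ∘ ∂ ∘ ι : V → V satisfies ∂_1 ∘ ∂_1 = 0. -/
/-- The field with two elements. -/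
abbrev F2 := ZMod 2

open TensorAlgebra in
theorem iInv_mul_aux (V : Type) [AddCommGroup V] [Module F2 V] (x y : TensorAlgebra F2 V) :
    ιInv (x * y) = algebraMapInv x • ιInv y + algebraMapInv y • ιInv x := by
  letI : Module F2ᵐᵒᵖ V := Module.compHom _ ((RingHom.id F2).fromOpposite mul_comm)
  haveI : IsCentralScalar F2 V := ⟨fun r m => rfl⟩
  have hfst : ∀ z : TensorAlgebra F2 V, (toTrivSqZeroExt z).fst = algebraMapInv z := by
    intro z
    have : (TrivSqZeroExt.fstHom F2 F2 V).comp (toTrivSqZeroExt (R := F2) (M := V)) = algebraMapInv := by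
      ext v
      simp [algebraMapInv]
    exact congrFun (congrArg DFunLike.coe this) z
  have hsnd : ∀ z : TensorAlgebra F2 V, ιInv z = (toTrivSqZeroExt z).snd := fun z => rfl
  rw [hsnd, hsnd, hsnd, map_mul, TrivSqZeroExt.snd_mul, hfst, hfst, op_smul_eq_smul]

open TensorAlgebra in
theorem iInv_one_aux (V : Type) [AddCommGroup V] [Module F2 V] :
    ιInv (1 : TensorAlgebra F2 V) = 0 := by
  letI : Module F2ᵐᵒᵖ V := Module.compHom _ ((RingHom.id F2).fromOpposite mul_comm)
  haveI : IsCentralScalar F2 V := ⟨fun r m => rfl⟩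
  have hsnd : ∀ z : TensorAlgebra F2 V, ιInv z = (toTrivSqZeroExt z).snd := fun z => rfl
  rw [hsnd, map_one, TrivSqZeroExt.snd_one]

/-- if `∂` is a linear map on the tensor algebra `A = T(V)` over `F₂`
satisfying the Leibniz rule and `∂ ∘ ∂ = 0`, and the constant (degree-0) part of `∂`
vanishes on generators, then the linearized differential `∂₁ = π₁ ∘ ∂ ∘ ι : V → V`
satisfies `∂₁ ∘ ∂₁ = 0`. -/
theorem linearized_differential_squares_to_zero
    (V : Type) [AddCommGroup V] [Module F2 V]
    (D : TensorAlgebra F2 V →ₗ[F2] TensorAlgebra F2 V)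
    (hLeib : ∀ x y : TensorAlgebra F2 V, D (x * y) = D x * y + x * D y)
    (hDD : D ∘ₗ D = 0)
    (h0 : ∀ v : V, TensorAlgebra.algebraMapInv (D (TensorAlgebra.ι F2 v)) = 0) :
    (TensorAlgebra.ιInv ∘ₗ D ∘ₗ TensorAlgebra.ι F2) ∘ₗ
      (TensorAlgebra.ιInv ∘ₗ D ∘ₗ TensorAlgebra.ι F2) = 0 := by
  open TensorAlgebra in
  have hD1 : D 1 = 0 := by
    have h := hLeib 1 1
    rw [one_mul, mul_one, one_mul] at h
    have h2 : D 1 + D 1 = D 1 + 0 := by rw [add_zero]; exact h.symm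
    exact add_left_cancel h2
  have hA : ∀ x : TensorAlgebra F2 V, TensorAlgebra.algebraMapInv (D x) = 0 := by
    intro x
    induction x using TensorAlgebra.induction with
    | algebraMap r =>
        rw [Algebra.algebraMap_eq_smul_one, map_smul, hD1, smul_zero, map_zero]
    | ι v => exact h0 v
    | mul x y hx hy =>
        rw [hLeib, map_add, map_mul, map_mul, hx, hy, zero_mul, mul_zero, add_zero]
    | add x y hx hy => rw [map_add, map_add, hx, hy, add_zero]
  have hι : ∀ v : V, TensorAlgebra.ιInv (TensorAlgebra.ι F2 v) = v := fun v =>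
    TensorAlgebra.ι_leftInverse v
  have hιam : ∀ r : F2, TensorAlgebra.ιInv (algebraMap F2 (TensorAlgebra F2 V) r) = 0 := by
    intro r
    rw [Algebra.algebraMap_eq_smul_one, map_smul, iInv_one_aux, smul_zero]
  have hB : ∀ x : TensorAlgebra F2 V,
      TensorAlgebra.ιInv (D (TensorAlgebra.ι F2 (TensorAlgebra.ιInv x))) =
        TensorAlgebra.ιInv (D x) := by
    intro x
    induction x using TensorAlgebra.induction with
    | algebraMap r =>
        rw [hιam, map_zero, map_zero, map_zero, Algebra.algebraMap_eq_smul_one,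
          map_smul, hD1, smul_zero, map_zero]
    | ι v => rw [hι]
    | mul x y hx hy =>
        rw [iInv_mul_aux V x y]
        simp only [map_add, map_smul, hx, hy]
        rw [hLeib, map_add, iInv_mul_aux, iInv_mul_aux, hA, hA, zero_smul, zero_smul,
          add_zero, zero_add, add_comm]
    | add x y hx hy => simp only [map_add, hx, hy]
  ext v
  simp only [LinearMap.comp_apply, LinearMap.zero_apply]
  rw [hB (D (TensorAlgebra.ι F2 v))]
  have h2 : D (D (TensorAlgebra.ι F2 v)) = 0 :=
    congrFun (congrArg DFunLike.coe hDD) (TensorAlgebra.ι F2 v)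
  rw [h2, map_zero]
end

section
/- Let Q and P be F₂-vector spaces with differentials ∂_Q and ∂_P, let η : Q → P be a chain map (η∂_Q = ∂_P η), let τ : P → P be a chain map (τ∂_P = ∂_P τ), and let ev : P → F₂ be linear with ev ∘ ∂_P = 0. Suppose Φ_{PP} : P → P ⊗ P, Φ_{QP} : P → Q ⊗ P, and Φ_{PQ} : P → P ⊗ Q are linear maps satisfying Φ_{PP} ∘ ∂_P + (∂_P ⊗ id_P + id_P ⊗ ∂_P) ∘ Φ_{PP} + (η ⊗ id_P) ∘ Φ_{QP} + (id_P ⊗ η) ∘ Φ_{PQ} = 0. Define φ := (id_Q ⊗ ev) ∘ Φ_{QP} : P → Q, H := (id_P ⊗ ev) ∘ Φ_{PP} ∘ τ : P → P, and ι := (id_P ⊗ (ev ∘ η)) ∘ Φ_{PQ} ∘ τ : P → P. Then η ∘ φ ∘ τ + ι = H ∘ ∂_P + ∂_P ∘ H. -/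
open TensorProduct

/-- the chain homotopy identity `η ∘ φ ∘ τ + ι = H ∘ ∂_P + ∂_P ∘ H`,
where `φ = (id ⊗ ev) ∘ Φ_{QP}`, `H = (id ⊗ ev) ∘ Φ_{PP} ∘ τ`,
`ι = (id ⊗ (ev ∘ η)) ∘ Φ_{PQ} ∘ τ`, derived from the `(P ⊗ P)`-component
`Φ_{PP} ∘ ∂_P + (∂_P ⊗ id + id ⊗ ∂_P) ∘ Φ_{PP} + (η ⊗ id) ∘ Φ_{QP} + (id ⊗ η) ∘ Φ_{PQ} = 0`
of `∂̂₁∂̂₂ + ∂̂₂∂̂₁ = 0`. -/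
theorem cap_product_homotopy_identity
    (Q P : Type) [AddCommGroup Q] [Module F2 Q] [AddCommGroup P] [Module F2 P]
    (dQ : Q →ₗ[F2] Q) (hdQ : dQ ∘ₗ dQ = 0)
    (dP : P →ₗ[F2] P) (hdP : dP ∘ₗ dP = 0)
    (η : Q →ₗ[F2] P) (hη : η ∘ₗ dQ = dP ∘ₗ η)
    (τ : P →ₗ[F2] P) (hτ : τ ∘ₗ dP = dP ∘ₗ τ)
    (ev : P →ₗ[F2] F2) (hev : ev ∘ₗ dP = 0)
    (ΦPP : P →ₗ[F2] P ⊗[F2] P)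
    (ΦQP : P →ₗ[F2] Q ⊗[F2] P)
    (ΦPQ : P →ₗ[F2] P ⊗[F2] Q)
    (hΦ : ΦPP ∘ₗ dP
      + (TensorProduct.map dP LinearMap.id + TensorProduct.map LinearMap.id dP) ∘ₗ ΦPP
      + TensorProduct.map η LinearMap.id ∘ₗ ΦQP
      + TensorProduct.map LinearMap.id η ∘ₗ ΦPQ = 0) :
    η ∘ₗ ((TensorProduct.rid F2 Q).toLinearMap ∘ₗ TensorProduct.map LinearMap.id ev ∘ₗ ΦQP) ∘ₗ τ
      + ((TensorProduct.rid F2 P).toLinearMap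
          ∘ₗ TensorProduct.map LinearMap.id (ev ∘ₗ η) ∘ₗ ΦPQ ∘ₗ τ)
      = ((TensorProduct.rid F2 P).toLinearMap
            ∘ₗ TensorProduct.map LinearMap.id ev ∘ₗ ΦPP ∘ₗ τ) ∘ₗ dP
        + dP ∘ₗ ((TensorProduct.rid F2 P).toLinearMap
            ∘ₗ TensorProduct.map LinearMap.id ev ∘ₗ ΦPP ∘ₗ τ) := by
  set L : P ⊗[F2] P →ₗ[F2] P :=
    (TensorProduct.rid F2 P).toLinearMap ∘ₗ TensorProduct.map LinearMap.id ev with hL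
  have id1 : L ∘ₗ TensorProduct.map dP LinearMap.id = dP ∘ₗ L := by
    apply TensorProduct.ext'
    intro p p'
    simp [hL, TensorProduct.smul_tmul', map_smul]
  have id2 : L ∘ₗ TensorProduct.map LinearMap.id dP = 0 := by
    apply TensorProduct.ext'
    intro p p'
    have : ev (dP p') = 0 := LinearMap.ext_iff.mp hev p'
    simp [hL, this]
  have id3 : L ∘ₗ TensorProduct.map η LinearMap.id
      = η ∘ₗ ((TensorProduct.rid F2 Q).toLinearMap ∘ₗ TensorProduct.map LinearMap.id ev) := by
    apply TensorProduct.ext'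
    intro q p'
    simp [hL]
  have id4 : L ∘ₗ TensorProduct.map LinearMap.id η
      = (TensorProduct.rid F2 P).toLinearMap ∘ₗ TensorProduct.map LinearMap.id (ev ∘ₗ η) := by
    apply TensorProduct.ext'
    intro p q
    simp [hL]
  have key : L ∘ₗ (ΦPP ∘ₗ dP
      + (TensorProduct.map dP LinearMap.id + TensorProduct.map LinearMap.id dP) ∘ₗ ΦPP
      + TensorProduct.map η LinearMap.id ∘ₗ ΦQP
      + TensorProduct.map LinearMap.id η ∘ₗ ΦPQ) ∘ₗ τ = 0 := by
    rw [hΦ]; simp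
  simp only [LinearMap.comp_add, LinearMap.add_comp, LinearMap.comp_assoc] at key ⊢
  rw [show ΦPP ∘ₗ dP ∘ₗ τ = ΦPP ∘ₗ τ ∘ₗ dP by rw [hτ],
      ← LinearMap.comp_assoc _ _ L, ← LinearMap.comp_assoc _ _ L,
      ← LinearMap.comp_assoc _ _ L, ← LinearMap.comp_assoc _ _ L,
      ← LinearMap.comp_assoc _ _ L,
      id1, id2, id3, id4] at key
  simp only [LinearMap.zero_comp, add_zero, LinearMap.comp_assoc] at key
  -- key : L∘ΦPP∘τ∘dP + dP∘L∘ΦPP∘τ + η∘rid∘map id ev∘ΦQP∘τ + rid∘map id (ev∘η)∘ΦPQ∘τ = 0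
  have char2 : ∀ (a b : P →ₗ[F2] P), a + b = 0 → a = b := by
    intro a b h
    have hb : b + b = 0 := by
      rw [← two_smul F2 b, show (2:F2) = 0 from rfl, zero_smul]
    calc a = a + (b + b) := by rw [hb, add_zero]
    _ = (a + b) + b := by abel
    _ = b := by rw [h, zero_add]
  simp only [hL, LinearMap.comp_assoc] at key
  exact (char2 _ _ (by rw [← key]; abel)).symm
end
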